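/- Fix an integer s ≥ 1. Let M be the free R-module on generators x3, y3, x2, y2, x1_1, …, x1_s, y1_1, …, y1_s, x0, and let d : M → M be the R-linear map with d(x3) = U²·y3 + y2; d(x2) = U²·y2 + U²·y1_1; d(x1_j) = U⁴·y1_j + U²·y1_{j+1} for 1 ≤ j ≤ s−1; d(x1_s) = U⁴·y1_s + x0; and d = 0 on y3, y2, all y1_j, and x0. Then d ∘ d = 0, and the quotient of the homology H = ker d / im d by its U-torsion submodule is a free R-module of rank 1, generated by the image of the class of y3. -/
import Mathlib


noncomputable section

/-- `R = 𝔽₂[U]`, the polynomial ring in one variable over the field with two elements. -/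
abbrev R : Type := Polynomial (ZMod 2)

/-- The variable `U` of `R = 𝔽₂[U]`. -/
def U : R := Polynomial.X

/-- The free `R`-module on the generators `x3, y3, x2, y2, x0` (indexed by `Fin 5`),
`x1_1, …, x1_s` (the first `Fin s` factor) and `y1_1, …, y1_s` (the second `Fin s`
factor). -/
abbrev M (s : ℕ) : Type := (Fin 5 ⊕ Fin s ⊕ Fin s) → R

def x3 (s : ℕ) : M s := Pi.single (Sum.inl 0) 1
def y3 (s : ℕ) : M s := Pi.single (Sum.inl 1) 1
def x2 (s : ℕ) : M s := Pi.single (Sum.inl 2) 1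
def y2 (s : ℕ) : M s := Pi.single (Sum.inl 3) 1
def x0 (s : ℕ) : M s := Pi.single (Sum.inl 4) 1
/-- `x1 s j` is the generator `x1_{j+1}` (so `j : Fin s` is the 0-based index). -/
def x1 (s : ℕ) (j : Fin s) : M s := Pi.single (Sum.inr (Sum.inl j)) 1
/-- `y1 s j` is the generator `y1_{j+1}` (so `j : Fin s` is the 0-based index). -/
def y1 (s : ℕ) (j : Fin s) : M s := Pi.single (Sum.inr (Sum.inr j)) 1

set_option maxHeartbeats 2000000 in
set_option maxRecDepth 8000 in
/-- Fix `s ≥ 1`.  Let `M` be the free `R`-module on the generators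
`x3, y3, x2, y2, x1_1, …, x1_s, y1_1, …, y1_s, x0`, and let `d : M → M` be the `R`-linear
map with `d x3 = U² • y3 + y2`; `d x2 = U² • y2 + U² • y1_1`;
`d x1_j = U⁴ • y1_j + U² • y1_{j+1}` for `1 ≤ j ≤ s - 1`; `d x1_s = U⁴ • y1_s + x0`; and
`d = 0` on `y3`, `y2`, all `y1_j`, and `x0`.  Then `d ∘ d = 0`, and the quotient of the
homology `H = ker d / im d` by its `U`-torsion submodule is a free `R`-module of rank one
generated by the image of the class of `y3`, i.e. the map `r ↦ r • [[y3]]` from `R` to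
that quotient is bijective. -/
theorem homology_mod_torsion_free_rank_one (s : ℕ) (hs : 1 ≤ s) (d : M s →ₗ[R] M s)
    (hx3 : d (x3 s) = (U ^ 2) • y3 s + y2 s)
    (hx2 : d (x2 s) = (U ^ 2) • y2 s + (U ^ 2) • y1 s ⟨0, hs⟩)
    (hx1 : ∀ j : Fin s, ∀ h : (j : ℕ) + 1 < s,
      d (x1 s j) = (U ^ 4) • y1 s j + (U ^ 2) • y1 s ⟨(j : ℕ) + 1, h⟩)
    (hx1s : d (x1 s ⟨s - 1, Nat.sub_lt hs Nat.one_pos⟩)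
      = (U ^ 4) • y1 s ⟨s - 1, Nat.sub_lt hs Nat.one_pos⟩ + x0 s)
    (hy3 : d (y3 s) = 0) (hy2 : d (y2 s) = 0)
    (hy1 : ∀ j : Fin s, d (y1 s j) = 0) (hx0 : d (x0 s) = 0) :
    d ∘ₗ d = 0 ∧
    ∃ hz : y3 s ∈ LinearMap.ker d,
      Function.Bijective
        (LinearMap.toSpanSingleton R
          ((LinearMap.ker d ⧸ (LinearMap.range d).comap (LinearMap.ker d).subtype) ⧸
            Submodule.torsion' R
              (LinearMap.ker d ⧸ (LinearMap.range d).comap (LinearMap.ker d).subtype)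
              (Submonoid.powers U))
          (Submodule.Quotient.mk (Submodule.Quotient.mk ⟨y3 s, hz⟩))) := by
  classical
  have hUne : (U : R) ≠ 0 := Polynomial.X_ne_zero
  have hcan : ∀ (n : ℕ) (a : R), U ^ n * a = 0 → a = 0 := by
    intro n a h
    rcases mul_eq_zero.mp h with h | h
    · exact absurd h (pow_ne_zero n hUne)
    · exact h
  have hneg1 : (-1 : R) = 1 := by
    have h2 : (2 : R) = 0 := CharP.cast_eq_zero _ 2
    rw [neg_eq_iff_add_eq_zero, one_add_one_eq_two, h2]
  have hdx1 : ∀ j : Fin s, d (x1 s j) = U^4 • y1 s j +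
      (if h : (j:ℕ)+1 < s then U^2 • y1 s ⟨(j:ℕ)+1,h⟩ else x0 s) := by
    intro j
    by_cases h : (j:ℕ)+1 < s
    · rw [dif_pos h, hx1 j h]
    · rw [dif_neg h]
      have hj : j = ⟨s-1, Nat.sub_lt hs Nat.one_pos⟩ := by
        have := j.isLt; ext; simp; omega
      rw [hj, hx1s]
  have hsum : ∀ m : M s, d m =
      (m (Sum.inl 0)) • (U^2 • y3 s + y2 s)
    + (m (Sum.inl 2)) • (U^2 • y2 s + U^2 • y1 s ⟨0,hs⟩)
    + ∑ j : Fin s, (m (Sum.inr (Sum.inl j))) •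
        (U^4 • y1 s j + (if h : (j:ℕ)+1 < s then U^2 • y1 s ⟨(j:ℕ)+1,h⟩ else x0 s)) := by
    intro m
    conv_lhs => rw [← Finset.univ_sum_single m]
    rw [map_sum]
    have key : ∀ i, d (Pi.single i (m i)) = m i • d (Pi.single i 1) := by
      intro i
      rw [show Pi.single i (m i) = m i • (Pi.single i 1 : M s) by
        rw [← Pi.single_smul, smul_eq_mul, mul_one], map_smul]
    simp only [key]
    rw [Fintype.sum_sum_type, Fintype.sum_sum_type, Fin.sum_univ_five]
    have e0 : (Pi.single (Sum.inl 0) 1 : M s) = x3 s := rfl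
    have e1 : (Pi.single (Sum.inl 1) 1 : M s) = y3 s := rfl
    have e2 : (Pi.single (Sum.inl 2) 1 : M s) = x2 s := rfl
    have e3 : (Pi.single (Sum.inl 3) 1 : M s) = y2 s := rfl
    have e4 : (Pi.single (Sum.inl 4) 1 : M s) = x0 s := rfl
    have e5 : ∀ j, (Pi.single (Sum.inr (Sum.inl j)) 1 : M s) = x1 s j := fun _ => rfl
    have e6 : ∀ j, (Pi.single (Sum.inr (Sum.inr j)) 1 : M s) = y1 s j := fun _ => rfl
    rw [e0, e1, e2, e3, e4]
    simp only [e5, e6, hx3, hy3, hx2, hy2, hx0, hy1, hdx1, smul_zero,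
      Finset.sum_const_zero, add_zero]
  have hA : ∀ m : M s, d m (Sum.inl 1) = U^2 * m (Sum.inl 0) := by
    intro m
    conv_lhs => rw [hsum m]
    simp [y3, y2, y1, x0, Pi.single_apply, dite_apply, Finset.sum_apply, mul_comm]
  have hB : ∀ m : M s, d m (Sum.inl 3) = m (Sum.inl 0) + U^2 * m (Sum.inl 2) := by
    intro m
    conv_lhs => rw [hsum m]
    simp [y3, y2, y1, x0, Pi.single_apply, dite_apply, Finset.sum_apply, mul_comm]
  have hC : ∀ m : M s, d m (Sum.inl 4)
      = m (Sum.inr (Sum.inl ⟨s-1, Nat.sub_lt hs Nat.one_pos⟩)) := by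
    intro m
    conv_lhs => rw [hsum m]
    simp [y3, y2, y1, x0, Pi.single_apply, dite_apply, Finset.sum_apply, mul_comm]
    rw [Finset.sum_eq_single (⟨s-1, Nat.sub_lt hs Nat.one_pos⟩ : Fin s)]
    · rw [if_neg (by simp only [Fin.val_mk]; omega)]
    · intro b _ hb
      rw [if_pos]
      have hbl := b.isLt
      rcases Nat.lt_or_ge (↑b + 1) s with h|h
      · exact h
      · exact absurd (Fin.ext (by simp only [Fin.val_mk]; omega)) hb
    · intro h; exact absurd (Finset.mem_univ _) h
  have hD : ∀ (m : M s) (k : Fin s), d m (Sum.inr (Sum.inr k))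
      = U^4 * m (Sum.inr (Sum.inl k)) +
      (if hk : (k:ℕ) = 0 then U^2 * m (Sum.inl 2)
       else U^2 * m (Sum.inr (Sum.inl ⟨(k:ℕ)-1,
         lt_trans (Nat.sub_lt (Nat.pos_of_ne_zero hk) Nat.one_pos) k.isLt⟩))) := by
    intro m k
    conv_lhs => rw [hsum m]
    simp [y3, y2, y1, x0, Pi.single_apply, dite_apply, Finset.sum_apply, mul_comm]
    rw [Finset.sum_add_distrib, Finset.sum_ite_eq, if_pos (Finset.mem_univ k)]
    by_cases hk : (k:ℕ) = 0
    · rw [dif_pos hk, if_pos (Fin.ext (by simp only [Fin.val_mk]; omega))]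
      rw [Finset.sum_eq_zero, add_zero, add_comm]
      intro x _
      split
      · rw [if_neg]
        intro hkx
        have := congrArg Fin.val hkx
        simp only [Fin.val_mk] at this
        omega
      · rfl
    · rw [dif_neg hk, if_neg (by intro h; exact hk (congrArg Fin.val h))]
      rw [zero_add]
      have hklt := k.isLt
      rw [Finset.sum_eq_single (⟨(k:ℕ)-1, by omega⟩ : Fin s)]
      · rw [dif_pos (by simp only [Fin.val_mk]; omega),
          if_pos (Fin.ext (by simp only [Fin.val_mk]; omega))]
      · intro b _ hb
        split
        · rw [if_neg]
          intro hkb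
          have := congrArg Fin.val hkb
          simp only [Fin.val_mk] at this
          exact hb (Fin.ext (by simp only [Fin.val_mk]; omega))
        · rfl
      · intro h; exact absurd (Finset.mem_univ _) h
  have hdd : d ∘ₗ d = 0 := by
    apply LinearMap.ext
    intro m
    simp only [LinearMap.comp_apply, LinearMap.zero_apply]
    conv_lhs => rw [hsum m]
    simp only [map_add, map_smul, map_sum, hy3, hy2, hx0, hy1, apply_dite d,
      smul_zero, add_zero, zero_add, Finset.sum_const_zero, dite_eq_ite, ite_self, smul_ite, smul_zero, Finset.sum_const_zero]
  have hz : y3 s ∈ LinearMap.ker d := LinearMap.mem_ker.mpr hy3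
  -- coordinates of p•y3
  have py3c : ∀ (p : R), (p • y3 s) (Sum.inl 1) = p ∧ (p • y3 s) (Sum.inl 3) = 0 ∧
      (p • y3 s) (Sum.inl 4) = 0 ∧ ∀ k : Fin s, (p • y3 s) (Sum.inr (Sum.inr k)) = 0 := by
    intro p
    refine ⟨?_, ?_, ?_, fun k => ?_⟩ <;> simp [y3, Pi.single_apply]
  have pzero : ∀ (p : R) (m : M s), d m = p • y3 s → p = 0 := by
    intro p m hdm
    obtain ⟨q1, q3, q4, qk⟩ := py3c p
    have c4 : m (Sum.inr (Sum.inl ⟨s-1, Nat.sub_lt hs Nat.one_pos⟩)) = 0 := by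
      have h := hC m
      rw [hdm, q4] at h
      exact h.symm
    have cx : ∀ t n : ℕ, ∀ h : n < s, n + t = s - 1 → m (Sum.inr (Sum.inl ⟨n, h⟩)) = 0 := by
      intro t
      induction t with
      | zero =>
        intro n h hn
        have : (⟨n, h⟩ : Fin s) = ⟨s-1, Nat.sub_lt hs Nat.one_pos⟩ := Fin.ext (by simp only [Fin.val_mk]; omega)
        rw [this]; exact c4
      | succ t ih =>
        intro n h hn
        have h1 : n + 1 < s := by omega
        have hDk := hD m ⟨n+1, h1⟩
        rw [hdm, qk] at hDk
        rw [dif_neg (by simp only [Fin.val_mk]; omega)] at hDk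
        simp only [Fin.val_mk, Nat.add_sub_cancel] at hDk
        rw [ih (n+1) h1 (by omega)] at hDk
        rw [show (⟨n, by omega⟩ : Fin s) = ⟨n, h⟩ from rfl] at hDk
        rw [mul_zero, zero_add] at hDk
        exact hcan 2 _ hDk.symm
    have cxall : ∀ j : Fin s, m (Sum.inr (Sum.inl j)) = 0 := by
      intro j
      have hj := j.isLt
      have := cx (s - 1 - (j:ℕ)) (j:ℕ) j.isLt (by omega)
      simpa using this
    have c2 : m (Sum.inl 2) = 0 := by
      have hDk := hD m ⟨0, hs⟩
      rw [hdm, qk, dif_pos rfl, cxall, mul_zero, zero_add] at hDk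
      exact hcan 2 _ hDk.symm
    have c0 : m (Sum.inl 0) = 0 := by
      have h := hB m
      rw [hdm, q3, c2, mul_zero, add_zero] at h
      exact h.symm
    have h := hA m
    rw [hdm, q1, c0, mul_zero] at h
    exact h
  have kercoords : ∀ m : M s, d m = 0 →
      m (Sum.inl 0) = 0 ∧ m (Sum.inl 2) = 0 ∧ ∀ j : Fin s, m (Sum.inr (Sum.inl j)) = 0 := by
    intro m hm
    have c0 : m (Sum.inl 0) = 0 := by
      have h := hA m
      rw [hm] at h
      exact hcan 2 _ h.symm
    have c2 : m (Sum.inl 2) = 0 := by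
      have h := hB m
      rw [hm] at h
      simp only [Pi.zero_apply] at h
      rw [c0, zero_add] at h
      exact hcan 2 _ h.symm
    refine ⟨c0, c2, ?_⟩
    have cx : ∀ n : ℕ, ∀ h : n < s, m (Sum.inr (Sum.inl ⟨n, h⟩)) = 0 := by
      intro n
      induction n with
      | zero =>
        intro h
        have hDk := hD m ⟨0, h⟩
        rw [hm, dif_pos rfl, c2, mul_zero, add_zero] at hDk
        simp only [Pi.zero_apply] at hDk
        exact hcan 4 _ hDk.symm
      | succ n ih =>
        intro h
        have hDk := hD m ⟨n+1, h⟩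
        rw [hm, dif_neg (by simp only [Fin.val_mk]; omega)] at hDk
        simp only [Pi.zero_apply] at hDk
        simp only [Fin.val_mk, Nat.add_sub_cancel] at hDk
        rw [ih (by omega), mul_zero, add_zero] at hDk
        exact hcan 4 _ hDk.symm
    intro j
    have := cx (j:ℕ) j.isLt
    simpa using this
  refine ⟨hdd, hz, ?_, ?_⟩
  · -- injectivity
    refine (injective_iff_map_eq_zero _).mpr ?_
    intro r hr
    rw [LinearMap.toSpanSingleton_apply] at hr
    rw [← Submodule.Quotient.mk_smul, Submodule.Quotient.mk_eq_zero] at hr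
    obtain ⟨⟨u, n, rfl⟩, hu⟩ := (Submodule.mem_torsion'_iff _ _).mp hr
    have hu' : (U ^ n * r) • (Submodule.Quotient.mk ⟨y3 s, hz⟩ :
        LinearMap.ker d ⧸ (LinearMap.range d).comap (LinearMap.ker d).subtype) = 0 := by
      rw [← smul_smul]; exact hu
    rw [← Submodule.Quotient.mk_smul, Submodule.Quotient.mk_eq_zero] at hu' 
    obtain ⟨b, hb⟩ := Submodule.mem_comap.mp hu'
    exact hcan n _ (pzero _ b (by rw [hb]; rfl))
  · -- surjectivity
    set B := (LinearMap.range d).comap (LinearMap.ker d).subtype with hBdef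
    set T := Submodule.torsion' R (LinearMap.ker d ⧸ B) (Submonoid.powers U) with hTdef
    set Y3 : LinearMap.ker d := ⟨y3 s, hz⟩ with hY3def
    have hzK : ∀ a : M s, d a = 0 → a ∈ LinearMap.ker d := fun a ha => LinearMap.mem_ker.mpr ha
    set Y2 : LinearMap.ker d := ⟨y2 s, hzK _ hy2⟩ with hY2def
    set X0 : LinearMap.ker d := ⟨x0 s, hzK _ hx0⟩ with hX0def
    set Y1 : Fin s → LinearMap.ker d := fun j => ⟨y1 s j, hzK _ (hy1 j)⟩ with hY1def
    have hnegH : ∀ v : LinearMap.ker d ⧸ B, -v = v := by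
      intro v
      rw [← neg_one_smul R v, hneg1, one_smul]
    have hmk0 : ∀ (a : LinearMap.ker d) (b : M s), d b = ↑a → B.mkQ a = 0 := by
      intro a b hb
      rw [Submodule.mkQ_apply]
      exact (Submodule.Quotient.mk_eq_zero _).mpr
        (Submodule.mem_comap.mpr (LinearMap.mem_range.mpr ⟨b, hb⟩))
    have f1 : B.mkQ Y2 = U^2 • B.mkQ Y3 := by
      have h0 : B.mkQ (U^2 • Y3 + Y2) = 0 := hmk0 _ (x3 s) (by rw [hx3]; rfl)
      rw [map_add, map_smul] at h0
      exact (eq_neg_of_add_eq_zero_right h0).trans (hnegH _)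
    have f2 : U^2 • B.mkQ (Y1 ⟨0, hs⟩) = U^4 • B.mkQ Y3 := by
      have h0 : B.mkQ (U^2 • Y2 + U^2 • Y1 ⟨0, hs⟩) = 0 := hmk0 _ (x2 s) (by rw [hx2]; rfl)
      rw [map_add, map_smul, map_smul] at h0
      rw [(eq_neg_of_add_eq_zero_right h0).trans (hnegH _), f1, smul_smul, ← pow_add]
    have fchain : ∀ n : ℕ, ∀ h : n < s,
        U^2 • B.mkQ (Y1 ⟨n, h⟩) = U^(2*n+4) • B.mkQ Y3 := by
      intro n
      induction n with
      | zero => intro h; exact f2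
      | succ n ih =>
        intro h
        have hn : n < s := by omega
        have h0 : B.mkQ (U^4 • Y1 ⟨n, hn⟩ + U^2 • Y1 ⟨n+1, h⟩) = 0 :=
          hmk0 _ (x1 s ⟨n, hn⟩) (by rw [hx1 ⟨n, hn⟩ h]; rfl)
        rw [map_add, map_smul, map_smul] at h0
        rw [(eq_neg_of_add_eq_zero_right h0).trans (hnegH _)]
        have : U^4 • B.mkQ (Y1 ⟨n, hn⟩) = U^2 • (U^2 • B.mkQ (Y1 ⟨n, hn⟩)) := by
          rw [smul_smul, ← pow_add]
        rw [this, ih hn, smul_smul, ← pow_add,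
          show 2+(2*n+4) = 2*(n+1)+4 by omega]

    have fx0 : B.mkQ X0 = U^4 • B.mkQ (Y1 ⟨s-1, Nat.sub_lt hs Nat.one_pos⟩) := by
      have h0 : B.mkQ (U^4 • Y1 ⟨s-1, Nat.sub_lt hs Nat.one_pos⟩ + X0) = 0 :=
        hmk0 _ (x1 s ⟨s-1, Nat.sub_lt hs Nat.one_pos⟩) (by rw [hx1s]; rfl)
      rw [map_add, map_smul] at h0
      exact (eq_neg_of_add_eq_zero_right h0).trans (hnegH _)
    have htf : ∀ (q : (LinearMap.ker d ⧸ B) ⧸ T) (n : ℕ), U^n • q = 0 → q = 0 := by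
      intro q n hq
      obtain ⟨h, rfl⟩ := Submodule.Quotient.mk_surjective _ q
      rw [← Submodule.Quotient.mk_smul, Submodule.Quotient.mk_eq_zero] at hq
      rw [Submodule.Quotient.mk_eq_zero]
      obtain ⟨⟨u, humem⟩, hu⟩ := (Submodule.mem_torsion'_iff _ _).mp hq
      obtain ⟨n', hn'⟩ := humem
      refine (Submodule.mem_torsion'_iff _ _).mpr
        ⟨⟨U^(n'+n), ⟨n'+n, rfl⟩⟩, ?_⟩
      show U^(n'+n) • h = 0
      have hu2 : u • (U^n • h) = 0 := hu
      rw [← hn'] at hu2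
      rw [pow_add, mul_smul]
      exact hu2
    have hP1 : ∀ j : Fin s, T.mkQ (B.mkQ (Y1 j)) = U^(2*(j:ℕ)+2) • T.mkQ (B.mkQ Y3) := by
      intro j
      have hc := congrArg T.mkQ (fchain (j:ℕ) j.isLt)
      rw [map_smul, map_smul] at hc
      have hj : (⟨(j:ℕ), j.isLt⟩ : Fin s) = j := Fin.eta j j.isLt
      rw [hj] at hc
      have hsub : U^2 • (T.mkQ (B.mkQ (Y1 j)) - U^(2*(j:ℕ)+2) • T.mkQ (B.mkQ Y3)) = 0 := by
        rw [smul_sub, hc, smul_smul, ← pow_add,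
          show 2+(2*(j:ℕ)+2) = 2*(j:ℕ)+4 by omega, sub_eq_zero]
      exact sub_eq_zero.mp (htf _ 2 hsub)
    have hP2 : T.mkQ (B.mkQ Y2) = U^2 • T.mkQ (B.mkQ Y3) := by
      have := congrArg T.mkQ f1
      rwa [map_smul] at this
    have hPX0 : T.mkQ (B.mkQ X0)
        = U^4 • (U^(2*(s-1)+2) • T.mkQ (B.mkQ Y3)) := by
      have := congrArg T.mkQ fx0
      rw [map_smul, hP1 ⟨s-1, Nat.sub_lt hs Nat.one_pos⟩] at this
      simpa only [Fin.val_mk] using this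
    intro z
    obtain ⟨hq, rfl⟩ := Submodule.Quotient.mk_surjective _ z
    obtain ⟨a, rfl⟩ := Submodule.Quotient.mk_surjective _ hq
    obtain ⟨c0, c2, cx⟩ := kercoords (a : M s) (LinearMap.mem_ker.mp a.2)
    have hmdec : (a : M s) =
        (a : M s) (Sum.inl 1) • y3 s + (a : M s) (Sum.inl 3) • y2 s
        + (a : M s) (Sum.inl 4) • x0 s
        + ∑ j : Fin s, (a : M s) (Sum.inr (Sum.inr j)) • y1 s j := by
      have sconv : ∀ (i : Fin 5 ⊕ Fin s ⊕ Fin s) (c : R),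
          (Pi.single i c : M s) = c • (Pi.single i 1 : M s) := by
        intro i c
        rw [← Pi.single_smul, smul_eq_mul, mul_one]
      conv_lhs => rw [← Finset.univ_sum_single (a : M s)]
      rw [Fintype.sum_sum_type, Fintype.sum_sum_type, Fin.sum_univ_five, c0, c2]
      have hxsum : ∑ j : Fin s,
          (Pi.single (Sum.inr (Sum.inl j)) ((a : M s) (Sum.inr (Sum.inl j))) : M s) = 0 :=
        Finset.sum_eq_zero (fun j _ => by rw [cx j, Pi.single_zero])
      rw [hxsum, Pi.single_zero, Pi.single_zero]
      simp only [zero_add, add_zero]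
      rw [sconv (Sum.inl 1) ((a : M s) (Sum.inl 1)),
        sconv (Sum.inl 3) ((a : M s) (Sum.inl 3)),
        sconv (Sum.inl 4) ((a : M s) (Sum.inl 4)),
        Finset.sum_congr rfl (fun j _ => sconv (Sum.inr (Sum.inr j)) ((a : M s) (Sum.inr (Sum.inr j))))]
      rfl
    have hadec : a = (a : M s) (Sum.inl 1) • Y3 + (a : M s) (Sum.inl 3) • Y2
        + (a : M s) (Sum.inl 4) • X0
        + ∑ j : Fin s, (a : M s) (Sum.inr (Sum.inr j)) • Y1 j := by
      apply Subtype.ext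
      push_cast
      exact hmdec
    refine ⟨(a : M s) (Sum.inl 1) + (a : M s) (Sum.inl 3) * U^2
      + (a : M s) (Sum.inl 4) * (U^4 * U^(2*(s-1)+2))
      + ∑ j : Fin s, (a : M s) (Sum.inr (Sum.inr j)) * U^(2*(j:ℕ)+2), ?_⟩
    rw [LinearMap.toSpanSingleton_apply]
    simp only [← Submodule.mkQ_apply]
    conv_rhs => rw [hadec]
    simp only [map_add, map_smul, map_sum, hP1, hP2, hPX0]
    simp only [add_smul, mul_smul, Finset.sum_smul]
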